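/- Let G=(V,E,w) be a weighted graph on n vertices and φ ≥ 1. Call a cluster tree T a recursive φ-sparsest-cut tree for G if either |V| = 1, or the cut (V(A), V(B)) induced by the two children A,B of the root has sparsity w(V(A),V(B))/(|V(A)|·|V(B)|) at most φ·min_{∅≠S⊊V} w(S,V∖S)/(|S|·|V∖S|), and the subtrees rooted at A and B are recursive φ-sparsest-cut trees for the induced subgraphs G[V(A)] and G[V(B)] respectively. Then every recursive φ-sparsest-cut tree T satisfies cost(T) ≤ (27/4)·φ·cost(T*) for every cluster tree T* of G; in particular cost(T) ≤ (27/4)·φ·OPT. -/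

import Mathlib

open scoped BigOperators

attribute [local instance] Classical.propDecidable

noncomputable section

/-! ### Cluster trees -/

/-- A (binary, rooted) hierarchical-clustering tree whose leaves are labelled by
vertices of `V`. -/
inductive ClusterTree (V : Type) : Type where
  | leaf : V → ClusterTree V
  | node : ClusterTree V → ClusterTree V → ClusterTree V

namespace ClusterTree

variable {V : Type}

/-- The list of leaf labels of the tree (left-to-right). -/
def leavesList : ClusterTree V → List V
  | leaf v => [v]
  | node L R => leavesList L ++ leavesList R

/-- The set of leaf labels of the tree. -/
def leaves [DecidableEq V] (T : ClusterTree V) : Finset V :=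
  T.leavesList.toFinset

end ClusterTree

section Defs

variable {V : Type}

/-- `T` is a cluster tree for the whole (finite) vertex set `V`: its leaves are
pairwise distinct and exhaust the vertices. -/
def IsClusterTree [DecidableEq V] [Fintype V] (T : ClusterTree V) : Prop :=
  T.leavesList.Nodup ∧ T.leaves = Finset.univ

/-- `IsSubtreeOf s T` : `s` occurs as a rooted subtree of `T`. -/
def IsSubtreeOf : ClusterTree V → ClusterTree V → Prop
  | s, ClusterTree.leaf v => s = ClusterTree.leaf v
  | s, ClusterTree.node L R => s = ClusterTree.node L R ∨ IsSubtreeOf s L ∨ IsSubtreeOf s R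

/-- The subtree of `T` rooted at the lowest common ancestor of the leaves `x` and `y`. -/
def lcaSubtree [DecidableEq V] : ClusterTree V → V → V → ClusterTree V
  | ClusterTree.leaf v, _, _ => ClusterTree.leaf v
  | ClusterTree.node L R, x, y =>
    if x ∈ L.leaves ∧ y ∈ L.leaves then lcaSubtree L x y
    else if x ∈ R.leaves ∧ y ∈ R.leaves then lcaSubtree R x y
    else ClusterTree.node L R

/-- `w(A, B) = ∑_{a ∈ A, b ∈ B} w a b`. -/
def cutWeight (w : V → V → ℝ) (A B : Finset V) : ℝ := ∑ a ∈ A, ∑ b ∈ B, w a b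

/-- `w(A) = ∑_{a, b ∈ A} w a b` (ordered pairs; each edge counted twice). -/
def innerWeight (w : V → V → ℝ) (A : Finset V) : ℝ := ∑ a ∈ A, ∑ b ∈ A, w a b

/-- `∑_{e ∈ E} w(e)`, for a symmetric weight function with zero diagonal. -/
def totalWeight [Fintype V] (w : V → V → ℝ) : ℝ := (∑ u : V, ∑ v : V, w u v) / 2

/-- Cost of a cluster tree: each internal node `N` with children `N₁, N₂`
contributes `w(V(N₁), V(N₂)) · g(|V(N₁)|, |V(N₂)|)`. -/
def treeCost [DecidableEq V] (w : V → V → ℝ) (g : ℕ → ℕ → ℝ) : ClusterTree V → ℝ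
  | ClusterTree.leaf _ => 0
  | ClusterTree.node L R =>
      cutWeight w L.leaves R.leaves * g L.leaves.card R.leaves.card
        + treeCost w g L + treeCost w g R

/-- Dasgupta's cost (= `treeCost` with `g (a, b) = a + b`). -/
def dasguptaCost [DecidableEq V] (w : V → V → ℝ) : ClusterTree V → ℝ
  | ClusterTree.leaf _ => 0
  | ClusterTree.node L R =>
      ((L.leaves.card + R.leaves.card : ℕ) : ℝ) * cutWeight w L.leaves R.leaves
        + dasguptaCost w L + dasguptaCost w R

/-! ### Generating trees -/

/-- `T` is a generating tree for the similarity graph `w` : there is a nonnegative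
weight function on the internal nodes, non-increasing from leaves towards the root,
realizing every edge weight at the corresponding LCA. -/
def IsGenerating [DecidableEq V] (w : V → V → ℝ) (T : ClusterTree V) : Prop :=
  ∃ W : ClusterTree V → ℝ,
    (∀ s, IsSubtreeOf s T → 0 ≤ W s) ∧
    (∀ L R, IsSubtreeOf (ClusterTree.node L R) T →
      ∀ s, IsSubtreeOf s L ∨ IsSubtreeOf s R → W (ClusterTree.node L R) ≤ W s) ∧
    (∀ x y, x ∈ T.leaves → y ∈ T.leaves → x ≠ y → w x y = W (lcaSubtree T x y))

/-- Generating tree in the dissimilarity setting (weights non-decreasing from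
leaves towards the root). -/
def IsGeneratingDissim [DecidableEq V] (w : V → V → ℝ) (T : ClusterTree V) : Prop :=
  ∃ W : ClusterTree V → ℝ,
    (∀ s, IsSubtreeOf s T → 0 ≤ W s) ∧
    (∀ L R, IsSubtreeOf (ClusterTree.node L R) T →
      ∀ s, IsSubtreeOf s L ∨ IsSubtreeOf s R → W s ≤ W (ClusterTree.node L R)) ∧
    (∀ x y, x ∈ T.leaves → y ∈ T.leaves → x ≠ y → w x y = W (lcaSubtree T x y))

/-- Strictly generating tree (similarity setting). -/
def IsStrictlyGenerating [DecidableEq V] (w : V → V → ℝ) (T : ClusterTree V) : Prop :=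
  ∃ W : ClusterTree V → ℝ,
    (∀ s, IsSubtreeOf s T → 0 ≤ W s) ∧
    (∀ L R, IsSubtreeOf (ClusterTree.node L R) T →
      ∀ s, IsSubtreeOf s L ∨ IsSubtreeOf s R → W (ClusterTree.node L R) < W s) ∧
    (∀ x y, x ∈ T.leaves → y ∈ T.leaves → x ≠ y → w x y = W (lcaSubtree T x y))

/-- Strictly generating tree (dissimilarity setting). -/
def IsStrictlyGeneratingDissim [DecidableEq V] (w : V → V → ℝ) (T : ClusterTree V) : Prop :=
  ∃ W : ClusterTree V → ℝ,
    (∀ s, IsSubtreeOf s T → 0 ≤ W s) ∧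
    (∀ L R, IsSubtreeOf (ClusterTree.node L R) T →
      ∀ s, IsSubtreeOf s L ∨ IsSubtreeOf s R → W s < W (ClusterTree.node L R)) ∧
    (∀ x y, x ∈ T.leaves → y ∈ T.leaves → x ≠ y → w x y = W (lcaSubtree T x y))

/-! ### Ultrametrics and ground-truth inputs -/

/-- `d` is an ultrametric on `V`. -/
def IsUltrametric (d : V → V → ℝ) : Prop :=
  (∀ x, d x x = 0) ∧ (∀ x y, d x y = 0 → x = y) ∧ (∀ x y, d x y = d y x) ∧
  (∀ x y, 0 ≤ d x y) ∧ (∀ x y z, d x y ≤ max (d x z) (d y z))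

/-- `w` is a similarity graph generated from an ultrametric via a
non-increasing nonnegative function `f`. -/
def GeneratedFromUltrametric (w : V → V → ℝ) : Prop :=
  ∃ (d : V → V → ℝ) (f : ℝ → ℝ),
    IsUltrametric d ∧
    (∀ a b : ℝ, 0 ≤ a → a ≤ b → f b ≤ f a) ∧
    (∀ a : ℝ, 0 ≤ a → 0 ≤ f a) ∧
    (∀ x y : V, x ≠ y → w x y = f (d x y))

/-- `w` is a dissimilarity graph generated from an ultrametric via a
non-decreasing nonnegative function `f`. -/
def GeneratedFromUltrametricDissim (w : V → V → ℝ) : Prop :=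
  ∃ (d : V → V → ℝ) (f : ℝ → ℝ),
    IsUltrametric d ∧
    (∀ a b : ℝ, 0 ≤ a → a ≤ b → f a ≤ f b) ∧
    (∀ a : ℝ, 0 ≤ a → 0 ≤ f a) ∧
    (∀ x y : V, x ≠ y → w x y = f (d x y))

/-- `w` is a similarity graph generated from a *minimal* ultrametric:
pairs with equal weights are at equal ultrametric distance. -/
def GeneratedFromMinimalUltrametric (w : V → V → ℝ) : Prop :=
  ∃ (d : V → V → ℝ) (f : ℝ → ℝ),
    IsUltrametric d ∧
    (∀ a b : ℝ, 0 ≤ a → a ≤ b → f b ≤ f a) ∧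
    (∀ a : ℝ, 0 ≤ a → 0 ≤ f a) ∧
    (∀ x y : V, x ≠ y → w x y = f (d x y)) ∧
    (∀ u v u' v' : V, u ≠ v → u' ≠ v' → f (d u v) = f (d u' v') → d u v = d u' v')

/-- Dissimilarity analogue of `GeneratedFromMinimalUltrametric`. -/
def GeneratedFromMinimalUltrametricDissim (w : V → V → ℝ) : Prop :=
  ∃ (d : V → V → ℝ) (f : ℝ → ℝ),
    IsUltrametric d ∧
    (∀ a b : ℝ, 0 ≤ a → a ≤ b → f a ≤ f b) ∧
    (∀ a : ℝ, 0 ≤ a → 0 ≤ f a) ∧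
    (∀ x y : V, x ≠ y → w x y = f (d x y)) ∧
    (∀ u v u' v' : V, u ≠ v → u' ≠ v' → f (d u v) = f (d u' v') → d u v = d u' v')

/-- `w` is a `δ`-adversarially-perturbed (similarity) ground-truth input. -/
def IsDeltaPerturbedGroundTruth (w : V → V → ℝ) (δ : ℝ) : Prop :=
  ∃ (d : V → V → ℝ) (f : ℝ → ℝ),
    IsUltrametric d ∧
    (∀ a b : ℝ, 0 ≤ a → a ≤ b → f b ≤ f a) ∧
    (∀ a : ℝ, 0 ≤ a → 0 ≤ f a) ∧
    (∀ x y : V, x ≠ y → f (d x y) ≤ w x y ∧ w x y ≤ δ * f (d x y))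

end Defs

/-- The unit-weight clique on `V`. -/
def cliqueW (V : Type) [DecidableEq V] : V → V → ℝ := fun x y => if x = y then 0 else 1

/-- Admissibility of a cost function (similarity setting): on every similarity graph
generated from a minimal ultrametric, a cluster tree minimizes the cost
iff it is a generating tree. -/
def Admissible (g : ℕ → ℕ → ℝ) : Prop :=
  ∀ (V : Type) [Fintype V] [DecidableEq V] (w : V → V → ℝ),
    GeneratedFromMinimalUltrametric w →
    ∀ T : ClusterTree V, IsClusterTree T →
      ((∀ T' : ClusterTree V, IsClusterTree T' → treeCost w g T ≤ treeCost w g T')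
        ↔ IsGenerating w T)

/-- Admissibility of a value function (dissimilarity setting): on every dissimilarity
graph generated from a minimal ultrametric, a cluster tree maximizes the value
iff it is a generating tree. -/
def AdmissibleDissim (g : ℕ → ℕ → ℝ) : Prop :=
  ∀ (V : Type) [Fintype V] [DecidableEq V] (w : V → V → ℝ),
    GeneratedFromMinimalUltrametricDissim w →
    ∀ T : ClusterTree V, IsClusterTree T →
      ((∀ T' : ClusterTree V, IsClusterTree T' → treeCost w g T' ≤ treeCost w g T)
        ↔ IsGeneratingDissim w T)

/-! ### Agglomerative (linkage) algorithms, modelled as a nondeterministic relation -/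

/-- The initial state of an agglomerative algorithm: all singleton trees. -/
def initState (V : Type) [Fintype V] : Multiset (ClusterTree V) :=
  Finset.univ.val.map ClusterTree.leaf

/-- One merge step of a generic linkage algorithm: merge two candidate trees whose
leaf-set distance `D` is best (w.r.t. `better a b` = "`a` is at least as good as `b`")
among all candidate pairs; any tie-breaking choice is allowed. -/
inductive MergeStep {V : Type} [DecidableEq V] (D : Finset V → Finset V → ℝ)
    (better : ℝ → ℝ → Prop) :
    Multiset (ClusterTree V) → Multiset (ClusterTree V) → Prop where
  | step : ∀ (rest : Multiset (ClusterTree V)) (T1 T2 : ClusterTree V),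
      (∀ (T1' T2' : ClusterTree V) (rest' : Multiset (ClusterTree V)),
          T1 ::ₘ T2 ::ₘ rest = T1' ::ₘ T2' ::ₘ rest' →
          better (D T1.leaves T2.leaves) (D T1'.leaves T2'.leaves)) →
      MergeStep D better (T1 ::ₘ T2 ::ₘ rest) (ClusterTree.node T1 T2 ::ₘ rest)

/-- `T` is a possible output of the linkage algorithm with dissimilarity/similarity
measure `D` and preference `better`. -/
def IsLinkageOutput {V : Type} [Fintype V] [DecidableEq V]
    (D : Finset V → Finset V → ℝ) (better : ℝ → ℝ → Prop) (T : ClusterTree V) : Prop :=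
  Relation.ReflTransGen (MergeStep D better) (initState V) {T}

/-- Average-linkage measure. -/
def avgDist {V : Type} (w : V → V → ℝ) (A B : Finset V) : ℝ :=
  cutWeight w A B / ((A.card : ℝ) * (B.card : ℝ))

/-- Single-linkage measure: `min_{x ∈ A, y ∈ B} w x y`. -/
def minLinkDist {V : Type} [DecidableEq V] (w : V → V → ℝ) (A B : Finset V) : ℝ :=
  WithTop.untopD 0 (((A ×ˢ B).image fun p => w p.1 p.2).min)

/-- Complete-linkage measure: `max_{x ∈ A, y ∈ B} w x y`. -/
def maxLinkDist {V : Type} [DecidableEq V] (w : V → V → ℝ) (A B : Finset V) : ℝ :=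
  WithBot.unbotD 0 (((A ×ˢ B).image fun p => w p.1 p.2).max)

/-! ### Cuts -/

section Cuts

variable {V : Type}

/-- `A ⊕ x` : add `x` to `A` if absent, remove it if present. -/
def symmDiffV [DecidableEq V] (A : Finset V) (x : V) : Finset V :=
  if x ∈ A then A.erase x else insert x A

/-- `(A, B)` is an `ε/|A ∪ B|`-locally-densest cut of the induced subgraph on `A ∪ B`. -/
def IsLocallyDensestCut [DecidableEq V] (w : V → V → ℝ) (ε : ℝ) (A B : Finset V) : Prop :=
  ∀ x ∈ A ∪ B,
    cutWeight w (symmDiffV A x) (symmDiffV B x) /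
        (((symmDiffV A x).card : ℝ) * ((symmDiffV B x).card : ℝ)) ≤
      (1 + ε / ((A ∪ B).card : ℝ)) *
        (cutWeight w A B / ((A.card : ℝ) * (B.card : ℝ)))

/-- Cluster trees obtained by recursively splitting along `ε/n`-locally-densest cuts. -/
def IsRecLocallyDensestCutTree [DecidableEq V] (w : V → V → ℝ) (ε : ℝ) :
    ClusterTree V → Prop
  | ClusterTree.leaf _ => True
  | ClusterTree.node L R =>
      IsLocallyDensestCut w ε L.leaves R.leaves ∧
      IsRecLocallyDensestCutTree w ε L ∧ IsRecLocallyDensestCutTree w ε R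

/-- Cluster trees obtained by recursively splitting along `φ`-approximate sparsest cuts. -/
def IsRecApproxSparsestCutTree [DecidableEq V] (w : V → V → ℝ) (φ : ℝ) :
    ClusterTree V → Prop
  | ClusterTree.leaf _ => True
  | ClusterTree.node L R =>
      (∀ S : Finset V, S ⊆ L.leaves ∪ R.leaves → S.Nonempty → S ⊂ L.leaves ∪ R.leaves →
        cutWeight w L.leaves R.leaves / ((L.leaves.card : ℝ) * (R.leaves.card : ℝ)) ≤
          φ * (cutWeight w S ((L.leaves ∪ R.leaves) \ S) /
            ((S.card : ℝ) * (((L.leaves ∪ R.leaves) \ S).card : ℝ)))) ∧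
      IsRecApproxSparsestCutTree w φ L ∧ IsRecApproxSparsestCutTree w φ R

/-- Cluster trees obtained by recursively splitting along exact sparsest cuts. -/
def IsRecSparsestCutTree [DecidableEq V] (w : V → V → ℝ) : ClusterTree V → Prop
  | ClusterTree.leaf _ => True
  | ClusterTree.node L R =>
      (∀ S : Finset V, S ⊆ L.leaves ∪ R.leaves → S.Nonempty → S ⊂ L.leaves ∪ R.leaves →
        cutWeight w L.leaves R.leaves / ((L.leaves.card : ℝ) * (R.leaves.card : ℝ)) ≤
          cutWeight w S ((L.leaves ∪ R.leaves) \ S) /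
            ((S.card : ℝ) * (((L.leaves ∪ R.leaves) \ S).card : ℝ))) ∧
      IsRecSparsestCutTree w L ∧ IsRecSparsestCutTree w R

/-- Cluster trees obtained by recursively splitting along exact densest cuts. -/
def IsRecDensestCutTree [DecidableEq V] (w : V → V → ℝ) : ClusterTree V → Prop
  | ClusterTree.leaf _ => True
  | ClusterTree.node L R =>
      (∀ S : Finset V, S ⊆ L.leaves ∪ R.leaves → S.Nonempty → S ⊂ L.leaves ∪ R.leaves →
        cutWeight w S ((L.leaves ∪ R.leaves) \ S) /
            ((S.card : ℝ) * (((L.leaves ∪ R.leaves) \ S).card : ℝ)) ≤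
          cutWeight w L.leaves R.leaves / ((L.leaves.card : ℝ) * (R.leaves.card : ℝ))) ∧
      IsRecDensestCutTree w L ∧ IsRecDensestCutTree w R

/-- Cluster trees produced by the bisection 2-Center algorithm (similarity setting). -/
def IsBisection2CenterTree [DecidableEq V] (w : V → V → ℝ) : ClusterTree V → Prop
  | ClusterTree.leaf _ => True
  | ClusterTree.node L R =>
      (∃ u ∈ L.leaves ∪ R.leaves, ∃ v ∈ L.leaves ∪ R.leaves, u ≠ v ∧
        (∃ r : ℝ,
          (∀ x ∈ L.leaves ∪ R.leaves, r ≤ max (w x u) (w x v)) ∧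
          (∀ u' ∈ L.leaves ∪ R.leaves, ∀ v' ∈ L.leaves ∪ R.leaves, u' ≠ v' →
            ∃ x ∈ L.leaves ∪ R.leaves, max (w x u') (w x v') ≤ r)) ∧
        L.leaves = (L.leaves ∪ R.leaves).filter fun x => w x v ≤ w x u) ∧
      IsBisection2CenterTree w L ∧ IsBisection2CenterTree w R

/-- Cluster trees produced by the bisection 2-Center algorithm (dissimilarity setting). -/
def IsBisection2CenterTreeDissim [DecidableEq V] (w : V → V → ℝ) : ClusterTree V → Prop
  | ClusterTree.leaf _ => True
  | ClusterTree.node L R =>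
      (∃ u ∈ L.leaves ∪ R.leaves, ∃ v ∈ L.leaves ∪ R.leaves, u ≠ v ∧
        (∃ r : ℝ,
          (∀ x ∈ L.leaves ∪ R.leaves, min (w x u) (w x v) ≤ r) ∧
          (∀ u' ∈ L.leaves ∪ R.leaves, ∀ v' ∈ L.leaves ∪ R.leaves, u' ≠ v' →
            ∃ x ∈ L.leaves ∪ R.leaves, r ≤ min (w x u') (w x v'))) ∧
        L.leaves = (L.leaves ∪ R.leaves).filter fun x => w x u ≤ w x v) ∧
      IsBisection2CenterTreeDissim w L ∧ IsBisection2CenterTreeDissim w R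

end Cuts

/-! ### Pivot algorithms -/

mutual
/-- Trees produced by the fast pivot algorithm (Algorithm 6 of CKMM):
pick a pivot `p`, split the other vertices into classes of equal similarity to `p`
(in strictly decreasing order of similarity), recurse, and attach along a spine. -/
inductive IsPivotTree {V : Type} [DecidableEq V] (w : V → V → ℝ) : ClusterTree V → Prop where
  | mk : ∀ (p : V) (T : ClusterTree V), PivotSpine w p T → IsPivotTree w T

/-- The spine of the pivot algorithm: `PivotSpine w p T` says that `T` is an iterated
union of the single-vertex tree on `p` with pivot trees of the similarity classes of
`p`, attached in strictly decreasing order of similarity to `p`. -/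
inductive PivotSpine {V : Type} [DecidableEq V] (w : V → V → ℝ) : V → ClusterTree V → Prop where
  | base : ∀ p : V, PivotSpine w p (ClusterTree.leaf p)
  | step : ∀ (p : V) (S T : ClusterTree V) (c : ℝ),
      PivotSpine w p S → IsPivotTree w T →
      (∀ v ∈ T.leaves, w p v = c) →
      (∀ u ∈ S.leaves, u ≠ p → c < w p u) →
      PivotSpine w p (ClusterTree.node S T)
end

mutual
/-- Trees produced by the robust pivot algorithm (Algorithm 7 of CKMM). -/
inductive IsRobustPivotTree {V : Type} [DecidableEq V] (w : V → V → ℝ) :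
    ClusterTree V → Prop where
  | mk : ∀ (p : V) (T : ClusterTree V), RobustPivotSpine w T.leaves p T →
      IsRobustPivotTree w T

/-- `RobustPivotSpine w U p T` : `T` is a prefix (a spine) of a run of the robust pivot
algorithm on the vertex set `U`, started at the pivot `p`.  At each step, `wi` is the
maximum weight of an edge in the cut `(Ṽ, U \ Ṽ)` (where `Ṽ` is the set of already
clustered vertices), and the next block is the least subset of `U \ Ṽ` closed under
adding any vertex having an edge of weight at least `wi` into the block or into `Ṽ`. -/
inductive RobustPivotSpine {V : Type} [DecidableEq V] (w : V → V → ℝ) :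
    Finset V → V → ClusterTree V → Prop where
  | base : ∀ (U : Finset V) (p : V), RobustPivotSpine w U p (ClusterTree.leaf p)
  | step : ∀ (U : Finset V) (p : V) (S T : ClusterTree V) (wi : ℝ),
      RobustPivotSpine w U p S →
      IsRobustPivotTree w T →
      (∃ p1 ∈ S.leaves, ∃ p2 ∈ U \ S.leaves, w p1 p2 = wi) →
      (∀ q1 ∈ S.leaves, ∀ q2 ∈ U \ S.leaves, w q1 q2 ≤ wi) →
      T.leaves ⊆ U \ S.leaves →
      (∀ u ∈ U \ S.leaves, (∃ v ∈ T.leaves ∪ S.leaves, wi ≤ w u v) → u ∈ T.leaves) →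
      (∀ C : Finset V, C ⊆ U \ S.leaves →
        (∀ u ∈ U \ S.leaves, (∃ v ∈ C ∪ S.leaves, wi ≤ w u v) → u ∈ C) →
        T.leaves ⊆ C) →
      RobustPivotSpine w U p (ClusterTree.node S T)
end

/-! ### Paths and caterpillars -/

/-- Attach the leaves from the list `l` one by one on top of `t` (a "spine"). -/
def spineTree {V : Type} : ClusterTree V → List V → ClusterTree V
  | t, [] => t
  | t, v :: vs => spineTree (ClusterTree.node t (ClusterTree.leaf v)) vs

/-- The unit-weight path on `n` vertices. -/
def pathW (n : ℕ) (i j : Fin n) : ℝ :=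
  if (i : ℕ) + 1 = (j : ℕ) ∨ (j : ℕ) + 1 = (i : ℕ) then 1 else 0

/-! ### Random graphs: hierarchical stochastic block model -/

/-- Index set for the potential edges of a graph on `Fin n`. -/
abbrev EdgeIdx (n : ℕ) := {p : Fin n × Fin n // p.1 < p.2}

/-- The (0/1) weight function of the random graph described by the edge
configuration `c`. -/
def configW {n : ℕ} (c : EdgeIdx n → Bool) (u v : Fin n) : ℝ :=
  if h : u < v then (if c ⟨(u, v), h⟩ then 1 else 0)
  else if h' : v < u then (if c ⟨(v, u), h'⟩ then 1 else 0)
  else 0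

/-- The probability of the edge configuration `c` when each edge `e` is present
independently with probability `q e`. -/
def configProb {n : ℕ} (q : Fin n → Fin n → ℝ) (c : EdgeIdx n → Bool) : ℝ :=
  ∏ e : EdgeIdx n, if c e then q e.val.1 e.val.2 else 1 - q e.val.1 e.val.2

/-- The expected cost `E[Γ(T) | ψ]` of a fixed cluster tree `T`, over the random
choice of the edges (with edge probabilities `q`). -/
def expectedCost {n : ℕ} (g : ℕ → ℕ → ℝ) (q : Fin n → Fin n → ℝ)
    (T : ClusterTree (Fin n)) : ℝ :=
  ∑ c : EdgeIdx n → Bool, configProb q c * treeCost (configW c) g T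

/-- The (fixed, size-independent) data of a hierarchical stochastic block model with
`k` bottom-level clusters: a generating tree `Ttil` with weights `Wtil` in `(0,1)`
(the graph `G̃ₖ` on `k` vertices generated from an ultrametric), and intra-cluster
probabilities `p i ∈ (0,1]` exceeding the weight of the parent of leaf `i`. -/
structure HSBM (k : ℕ) where
  Ttil : ClusterTree (Fin k)
  Wtil : ClusterTree (Fin k) → ℝ
  p : Fin k → ℝ
  ttil_isClusterTree : IsClusterTree Ttil
  wtil_pos : ∀ L R, IsSubtreeOf (ClusterTree.node L R) Ttil →
    0 < Wtil (ClusterTree.node L R)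
  wtil_lt_one : ∀ L R, IsSubtreeOf (ClusterTree.node L R) Ttil →
    Wtil (ClusterTree.node L R) < 1
  wtil_mono : ∀ L R, IsSubtreeOf (ClusterTree.node L R) Ttil →
    ∀ s, IsSubtreeOf s L ∨ IsSubtreeOf s R → Wtil (ClusterTree.node L R) ≤ Wtil s
  p_pos : ∀ i, 0 < p i
  p_le_one : ∀ i, p i ≤ 1
  p_gt_parent : ∀ L R, IsSubtreeOf (ClusterTree.node L R) Ttil →
    ∀ i : Fin k, L = ClusterTree.leaf i ∨ R = ClusterTree.leaf i →
      Wtil (ClusterTree.node L R) < p i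

/-- The edge probabilities of the HSBM `M` with sparsity `α`, given the assignment
`ψ` of vertices to bottom-level clusters.  These are also the edge weights of the
expected graph `Ḡ`. -/
def HSBM.edgeProb {k : ℕ} (M : HSBM k) (α : ℝ) {n : ℕ} (ψ : Fin n → Fin k) :
    Fin n → Fin n → ℝ := fun u v =>
  if ψ u = ψ v then α * M.p (ψ u)
  else α * M.Wtil (lcaSubtree M.Ttil (ψ u) (ψ v))

/-- The probability of the sample `ω = (ψ, c)` (labels and edges) of the HSBM `M`
with label proportions `f` and sparsity `α`. -/
def hsbmProb {k : ℕ} (M : HSBM k) (f : Fin k → ℝ) (α : ℝ) {n : ℕ}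
    (ω : (Fin n → Fin k) × (EdgeIdx n → Bool)) : ℝ :=
  (∏ v : Fin n, f (ω.1 v)) * configProb (M.edgeProb α ω.1) ω.2

/-- The common cost `κ(n)` of all cluster trees of the unit-weight clique on `n`
vertices (computed on the caterpillar tree). -/
def cliqueTreeCost (g : ℕ → ℕ → ℝ) (n : ℕ) : ℝ :=
  ∑ i ∈ Finset.range n, (i : ℝ) * g i 1

/-- The smoothness property: `max {g(n₁,n₂) : n₁+n₂ = n} = O(κ(n)/n²)`. -/
def SmoothCost (g : ℕ → ℕ → ℝ) : Prop :=
  ∃ C : ℝ, 0 < C ∧ ∀ n1 n2 : ℕ, 1 ≤ n1 → 1 ≤ n2 →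
    g n1 n2 * (((n1 + n2 : ℕ) : ℝ)) ^ 2 ≤ C * cliqueTreeCost g (n1 + n2)

end


/-! ### Auxiliary development for Statement 2 -/

noncomputable section CKMMAux

namespace CKMMAux

open ClusterTree Finset

variable {V : Type} [DecidableEq V]

lemma leaves_node (L R : ClusterTree V) :
    (ClusterTree.node L R).leaves = L.leaves ∪ R.leaves := by
  simp [ClusterTree.leaves, ClusterTree.leavesList]

lemma leaves_leaf (v : V) : (ClusterTree.leaf v).leaves = {v} := by
  simp [ClusterTree.leaves, ClusterTree.leavesList]

lemma leaves_nonempty (t : ClusterTree V) : t.leaves.Nonempty := by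
  induction t with
  | leaf v => exact ⟨v, by simp [leaves_leaf]⟩
  | node L R ihL ihR =>
      obtain ⟨x, hx⟩ := ihL
      exact ⟨x, by rw [leaves_node]; exact Finset.mem_union_left _ hx⟩

lemma nodup_left {L R : ClusterTree V} (h : (ClusterTree.node L R).leavesList.Nodup) :
    L.leavesList.Nodup := by
  have h' : (L.leavesList ++ R.leavesList).Nodup := h
  exact (List.nodup_append.mp h').1

lemma nodup_right {L R : ClusterTree V} (h : (ClusterTree.node L R).leavesList.Nodup) :
    R.leavesList.Nodup := by
  have h' : (L.leavesList ++ R.leavesList).Nodup := h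
  exact (List.nodup_append.mp h').2.1

lemma disjoint_leaves {L R : ClusterTree V} (h : (ClusterTree.node L R).leavesList.Nodup) :
    Disjoint L.leaves R.leaves := by
  have h' : (L.leavesList ++ R.leavesList).Nodup := h
  exact List.disjoint_toFinset_iff_disjoint.mpr (List.disjoint_of_nodup_append h')

lemma card_leaves_node {L R : ClusterTree V} (h : (ClusterTree.node L R).leavesList.Nodup) :
    (ClusterTree.node L R).leaves.card = L.leaves.card + R.leaves.card := by
  rw [leaves_node, Finset.card_union_of_disjoint (disjoint_leaves h)]

lemma one_le_card_leaves (t : ClusterTree V) : 1 ≤ t.leaves.card :=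
  Finset.Nonempty.card_pos (leaves_nonempty t)

lemma lca_left {L R : ClusterTree V} {u v : V} (hu : u ∈ L.leaves) (hv : v ∈ L.leaves) :
    lcaSubtree (ClusterTree.node L R) u v = lcaSubtree L u v := by
  simp [lcaSubtree, hu, hv]

lemma lca_right {L R : ClusterTree V} {u v : V}
    (hd : Disjoint L.leaves R.leaves) (hu : u ∈ R.leaves) (hv : v ∈ R.leaves) :
    lcaSubtree (ClusterTree.node L R) u v = lcaSubtree R u v := by
  have hu' : u ∉ L.leaves := fun hc => (Finset.disjoint_left.mp hd hc) hu
  simp [lcaSubtree, hu, hv, hu']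

lemma lca_mix {L R : ClusterTree V} {u v : V}
    (h1 : ¬(u ∈ L.leaves ∧ v ∈ L.leaves)) (h2 : ¬(u ∈ R.leaves ∧ v ∈ R.leaves)) :
    lcaSubtree (ClusterTree.node L R) u v = ClusterTree.node L R := by
  simp [lcaSubtree, h1, h2]

lemma lca_node_def (L R : ClusterTree V) (x y : V) :
    lcaSubtree (ClusterTree.node L R) x y =
      if x ∈ L.leaves ∧ y ∈ L.leaves then lcaSubtree L x y
      else if x ∈ R.leaves ∧ y ∈ R.leaves then lcaSubtree R x y
      else ClusterTree.node L R := rfl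

lemma lca_comm (t : ClusterTree V) (u v : V) :
    lcaSubtree t u v = lcaSubtree t v u := by
  induction t with
  | leaf x => rfl
  | node L R ihL ihR =>
      rw [lca_node_def, lca_node_def]
      split_ifs <;> first | exact ihL | exact ihR | rfl | tauto

/-- The comparison cut: descend in `t` maintaining `2·|U| < 3·|leaves ∩ U|`;
return a child intersection whose size is between `|U|/3` and `2|U|/3`. -/
def chooseCut : ClusterTree V → Finset V → Finset V
  | ClusterTree.leaf _, _ => ∅
  | ClusterTree.node L R, U =>
      if 2 * U.card < 3 * (L.leaves ∩ U).card then chooseCut L U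
      else if 2 * U.card < 3 * (R.leaves ∩ U).card then chooseCut R U
      else if U.card ≤ 3 * (L.leaves ∩ U).card then L.leaves ∩ U
      else R.leaves ∩ U

lemma chooseCut_spec (ts : ClusterTree V) (U : Finset V) (hnd : ts.leavesList.Nodup)
    (h2 : 2 ≤ U.card) (hbig : 2 * U.card < 3 * (ts.leaves ∩ U).card) :
    chooseCut ts U ⊆ ts.leaves ∩ U ∧
    U.card ≤ 3 * (chooseCut ts U).card ∧
    3 * (chooseCut ts U).card ≤ 2 * U.card ∧
    ∀ u ∈ chooseCut ts U, ∀ v ∈ U, v ∉ chooseCut ts U →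
      2 * U.card < 3 * ((lcaSubtree ts u v).leaves ∩ U).card := by
  induction ts with
  | leaf x =>
      exfalso
      have hle : ((ClusterTree.leaf x).leaves ∩ U).card ≤ 1 := by
        have : (ClusterTree.leaf x).leaves ∩ U ⊆ {x} := by
          rw [leaves_leaf]; exact Finset.inter_subset_left
        simpa using Finset.card_le_card this
      omega
  | node L R ihL ihR =>
      have hd : Disjoint L.leaves R.leaves := disjoint_leaves hnd
      have hc : ((ClusterTree.node L R).leaves ∩ U).card ≤
          (L.leaves ∩ U).card + (R.leaves ∩ U).card := by
        rw [leaves_node, Finset.union_inter_distrib_right]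
        exact Finset.card_union_le _ _
      have hdef : chooseCut (ClusterTree.node L R) U =
          (if 2 * U.card < 3 * (L.leaves ∩ U).card then chooseCut L U
          else if 2 * U.card < 3 * (R.leaves ∩ U).card then chooseCut R U
          else if U.card ≤ 3 * (L.leaves ∩ U).card then L.leaves ∩ U
          else R.leaves ∩ U) := rfl
      rw [hdef]
      by_cases hL : 2 * U.card < 3 * (L.leaves ∩ U).card
      · rw [if_pos hL]
        obtain ⟨hsub, hlow, hup, hlca⟩ := ihL (nodup_left hnd) hL
        have hsub' : chooseCut L U ⊆ (ClusterTree.node L R).leaves ∩ U := by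
          refine hsub.trans (Finset.inter_subset_inter ?_ (Finset.Subset.refl _))
          rw [leaves_node]; exact Finset.subset_union_left
        refine ⟨hsub', hlow, hup, ?_⟩
        intro u hu v hv hv'
        have huL : u ∈ L.leaves := (Finset.mem_inter.mp (hsub hu)).1
        by_cases hvL : v ∈ L.leaves
        · rw [lca_left huL hvL]; exact hlca u hu v hv hv'
        · have huR : u ∉ R.leaves := fun hc' => (Finset.disjoint_left.mp hd huL) hc'
          rw [lca_mix (fun hc' => hvL hc'.2) (fun hc' => huR hc'.1)]
          exact hbig
      · rw [if_neg hL]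
        by_cases hR : 2 * U.card < 3 * (R.leaves ∩ U).card
        · rw [if_pos hR]
          obtain ⟨hsub, hlow, hup, hlca⟩ := ihR (nodup_right hnd) hR
          have hsub' : chooseCut R U ⊆ (ClusterTree.node L R).leaves ∩ U := by
            refine hsub.trans (Finset.inter_subset_inter ?_ (Finset.Subset.refl _))
            rw [leaves_node]; exact Finset.subset_union_right
          refine ⟨hsub', hlow, hup, ?_⟩
          intro u hu v hv hv'
          have huR : u ∈ R.leaves := (Finset.mem_inter.mp (hsub hu)).1
          by_cases hvR : v ∈ R.leaves
          · rw [lca_right hd huR hvR]; exact hlca u hu v hv hv'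
          · have huL : u ∉ L.leaves := fun hc' => (Finset.disjoint_right.mp hd huR) hc'
            rw [lca_mix (fun hc' => huL hc'.1) (fun hc' => hvR hc'.2)]
            exact hbig
        · rw [if_neg hR]
          by_cases hL3 : U.card ≤ 3 * (L.leaves ∩ U).card
          · rw [if_pos hL3]
            refine ⟨?_, hL3, by omega, ?_⟩
            · refine Finset.inter_subset_inter ?_ (Finset.Subset.refl _)
              rw [leaves_node]; exact Finset.subset_union_left
            · intro u hu v hv hv'
              have huL : u ∈ L.leaves := (Finset.mem_inter.mp hu).1
              have hvL : v ∉ L.leaves := fun hc' => hv' (Finset.mem_inter.mpr ⟨hc', hv⟩)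
              have huR : u ∉ R.leaves := fun hc' => (Finset.disjoint_left.mp hd huL) hc'
              rw [lca_mix (fun hc' => hvL hc'.2) (fun hc' => huR hc'.1)]
              exact hbig
          · rw [if_neg hL3]
            refine ⟨?_, by omega, by omega, ?_⟩
            · refine Finset.inter_subset_inter ?_ (Finset.Subset.refl _)
              rw [leaves_node]; exact Finset.subset_union_right
            · intro u hu v hv hv'
              have huR : u ∈ R.leaves := (Finset.mem_inter.mp hu).1
              have hvR : v ∉ R.leaves := fun hc' => hv' (Finset.mem_inter.mpr ⟨hc', hv⟩)
              have huL : u ∉ L.leaves := fun hc' => (Finset.disjoint_right.mp hd huR) hc'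
              rw [lca_mix (fun hc' => huL hc'.1) (fun hc' => hvR hc'.2)]
              exact hbig

section Weights

variable (w : V → V → ℝ)

lemma cutWeight_nonneg (hnonneg : ∀ u v, 0 ≤ w u v) (A B : Finset V) :
    0 ≤ cutWeight w A B :=
  Finset.sum_nonneg fun _ _ => Finset.sum_nonneg fun _ _ => hnonneg _ _

lemma cutWeight_comm (hsym : ∀ u v, w u v = w v u) (A B : Finset V) :
    cutWeight w A B = cutWeight w B A := by
  rw [cutWeight, cutWeight, Finset.sum_comm]
  exact Finset.sum_congr rfl fun a _ => Finset.sum_congr rfl fun b _ => hsym b a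

end Weights

lemma sum_ite_and_mem {U S T' : Finset V} (hS : S ⊆ U) (hT : T' ⊆ U) (f : V → V → ℝ) :
    (∑ u ∈ U, ∑ v ∈ U, if u ∈ S ∧ v ∈ T' then f u v else 0)
      = ∑ u ∈ S, ∑ v ∈ T', f u v := by
  have h1 : ∀ u, (∑ v ∈ U, if u ∈ S ∧ v ∈ T' then f u v else 0)
      = if u ∈ S then ∑ v ∈ T', f u v else 0 := by
    intro u
    by_cases hu : u ∈ S
    · rw [if_pos hu]
      have : ∀ v, (if u ∈ S ∧ v ∈ T' then f u v else 0) = if v ∈ T' then f u v else 0 := by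
        intro v; by_cases hv : v ∈ T' <;> simp [hv, hu]
      rw [Finset.sum_congr rfl fun v _ => this v, Finset.sum_ite_mem,
        Finset.inter_eq_right.mpr hT]
    · rw [if_neg hu]
      refine Finset.sum_eq_zero fun v _ => ?_
      rw [if_neg (fun hc => hu hc.1)]
  rw [Finset.sum_congr rfl fun u _ => h1 u, Finset.sum_ite_mem, Finset.inter_eq_right.mpr hS]

/-- The charge function: at each internal node `U` of `t`, a pair crossing the
comparison cut `chooseCut ts U` is charged `a·b/m`. -/
def chg (ts : ClusterTree V) : ClusterTree V → V → V → ℝ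
  | ClusterTree.leaf _, _, _ => 0
  | ClusterTree.node L R, u, v =>
      (if u ∈ chooseCut ts (ClusterTree.node L R).leaves ∧
          v ∈ (ClusterTree.node L R).leaves \ chooseCut ts (ClusterTree.node L R).leaves then
        (L.leaves.card * R.leaves.card : ℝ) / ((L.leaves.card : ℝ) + R.leaves.card) else 0)
      + (if v ∈ chooseCut ts (ClusterTree.node L R).leaves ∧
          u ∈ (ClusterTree.node L R).leaves \ chooseCut ts (ClusterTree.node L R).leaves then
        (L.leaves.card * R.leaves.card : ℝ) / ((L.leaves.card : ℝ) + R.leaves.card) else 0)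
      + (if u ∈ L.leaves ∧ v ∈ L.leaves then chg ts L u v else 0)
      + (if u ∈ R.leaves ∧ v ∈ R.leaves then chg ts R u v else 0)

lemma chg_node_def (ts L R : ClusterTree V) (u v : V) :
    chg ts (ClusterTree.node L R) u v =
      (if u ∈ chooseCut ts (ClusterTree.node L R).leaves ∧
          v ∈ (ClusterTree.node L R).leaves \ chooseCut ts (ClusterTree.node L R).leaves then
        (L.leaves.card * R.leaves.card : ℝ) / ((L.leaves.card : ℝ) + R.leaves.card) else 0)
      + (if v ∈ chooseCut ts (ClusterTree.node L R).leaves ∧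
          u ∈ (ClusterTree.node L R).leaves \ chooseCut ts (ClusterTree.node L R).leaves then
        (L.leaves.card * R.leaves.card : ℝ) / ((L.leaves.card : ℝ) + R.leaves.card) else 0)
      + (if u ∈ L.leaves ∧ v ∈ L.leaves then chg ts L u v else 0)
      + (if u ∈ R.leaves ∧ v ∈ R.leaves then chg ts R u v else 0) := rfl

lemma chg_nonneg (ts t : ClusterTree V) (u v : V) : 0 ≤ chg ts t u v := by
  induction t with
  | leaf x => exact le_refl 0
  | node L R ihL ihR =>
      rw [chg_node_def]
      have hq : (0:ℝ) ≤ (L.leaves.card * R.leaves.card : ℝ) /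
          ((L.leaves.card : ℝ) + R.leaves.card) := by positivity
      refine add_nonneg (add_nonneg (add_nonneg ?_ ?_) ?_) ?_ <;>
        first
          | (split_ifs; exacts [hq, le_refl 0])
          | (split_ifs; exacts [ihL, le_refl 0])
          | (split_ifs; exacts [ihR, le_refl 0])

lemma q_le_left (L R : ClusterTree V) :
    (L.leaves.card * R.leaves.card : ℝ) / ((L.leaves.card : ℝ) + R.leaves.card)
      ≤ L.leaves.card := by
  have hb : (1:ℝ) ≤ R.leaves.card := by exact_mod_cast one_le_card_leaves R
  have ha : (1:ℝ) ≤ L.leaves.card := by exact_mod_cast one_le_card_leaves L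
  rw [div_le_iff₀ (by linarith)]
  nlinarith

lemma q_le_right (L R : ClusterTree V) :
    (L.leaves.card * R.leaves.card : ℝ) / ((L.leaves.card : ℝ) + R.leaves.card)
      ≤ R.leaves.card := by
  have hb : (1:ℝ) ≤ R.leaves.card := by exact_mod_cast one_le_card_leaves R
  have ha : (1:ℝ) ≤ L.leaves.card := by exact_mod_cast one_le_card_leaves L
  rw [div_le_iff₀ (by linarith)]
  nlinarith

/-- Lemma A: the charge of a pair is at most the number of leaves. -/
lemma chg_le_card (ts : ClusterTree V) (t : ClusterTree V) (hnd : t.leavesList.Nodup)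
    (u v : V) : chg ts t u v ≤ (t.leaves.card : ℝ) := by
  induction t with
  | leaf x =>
      show (0:ℝ) ≤ _
      rw [leaves_leaf]; simp
  | node L R ihL ihR =>
      have hd : Disjoint L.leaves R.leaves := disjoint_leaves hnd
      have hcard : ((ClusterTree.node L R).leaves.card : ℝ)
          = (L.leaves.card : ℝ) + R.leaves.card := by
        rw [card_leaves_node hnd]; push_cast; ring
      set S := chooseCut ts (ClusterTree.node L R).leaves with hS
      set q := (L.leaves.card * R.leaves.card : ℝ) / ((L.leaves.card : ℝ) + R.leaves.card)
        with hqdef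
      have hq0 : 0 ≤ q := by positivity
      rw [chg_node_def, hcard]
      -- at most one of the two crossing conditions holds
      have hcross : (if u ∈ S ∧ v ∈ (ClusterTree.node L R).leaves \ S then q else 0)
          + (if v ∈ S ∧ u ∈ (ClusterTree.node L R).leaves \ S then q else 0) ≤ q := by
        by_cases h1 : u ∈ S ∧ v ∈ (ClusterTree.node L R).leaves \ S
        · rw [if_pos h1, if_neg, add_zero]
          intro h2
          exact (Finset.mem_sdiff.mp h2.2).2 h1.1
        · rw [if_neg h1, zero_add]
          split_ifs
          · exact le_refl q
          · exact hq0
      by_cases hL : u ∈ L.leaves ∧ v ∈ L.leaves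
      · have hR : ¬(u ∈ R.leaves ∧ v ∈ R.leaves) :=
          fun hc => (Finset.disjoint_left.mp hd hL.1) hc.1
        rw [if_pos hL, if_neg hR, add_zero]
        have := ihL (nodup_left hnd)
        have hqb : q ≤ (R.leaves.card : ℝ) := q_le_right L R
        linarith
      · rw [if_neg hL]
        by_cases hR : u ∈ R.leaves ∧ v ∈ R.leaves
        · rw [if_pos hR, add_zero]  -- careful: structure is (cross + 0) + chgR
          have := ihR (nodup_right hnd)
          have hqb : q ≤ (L.leaves.card : ℝ) := q_le_left L R
          linarith
        · rw [if_neg hR]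
          have hb : (1:ℝ) ≤ R.leaves.card := by exact_mod_cast one_le_card_leaves R
          have ha : (1:ℝ) ≤ L.leaves.card := by exact_mod_cast one_le_card_leaves L
          have hqb : q ≤ (R.leaves.card : ℝ) := q_le_right L R
          linarith

/-- Lemma B: the charge of a pair is at most `3/2` times the size of the part of
its `ts`-LCA cluster that is still present. -/
lemma chg_le_lca (ts : ClusterTree V) (hnds : ts.leavesList.Nodup)
    (t : ClusterTree V) (hndt : t.leavesList.Nodup) (hsub : t.leaves ⊆ ts.leaves)
    (u v : V) :
    chg ts t u v ≤ 3/2 * (((lcaSubtree ts u v).leaves ∩ t.leaves).card : ℝ) := by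
  induction t with
  | leaf x =>
      show (0:ℝ) ≤ _
      positivity
  | node L R ihL ihR =>
      have hd : Disjoint L.leaves R.leaves := disjoint_leaves hndt
      set U := (ClusterTree.node L R).leaves with hU
      set S := chooseCut ts U with hS
      set q := (L.leaves.card * R.leaves.card : ℝ) / ((L.leaves.card : ℝ) + R.leaves.card)
        with hqdef
      have hq0 : 0 ≤ q := by positivity
      have ha1 : 1 ≤ L.leaves.card := one_le_card_leaves L
      have hb1 : 1 ≤ R.leaves.card := one_le_card_leaves R
      have hm2 : 2 ≤ U.card := by rw [hU, card_leaves_node hndt]; omega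
      have hinter : ts.leaves ∩ U = U := Finset.inter_eq_right.mpr hsub
      have hbig : 2 * U.card < 3 * (ts.leaves ∩ U).card := by rw [hinter]; omega
      obtain ⟨hsubS, hlow, hup, hlca⟩ := chooseCut_spec ts U hnds hm2 hbig
      have hx0 : (0:ℝ) ≤ (((lcaSubtree ts u v).leaves ∩ U).card : ℝ) := by positivity
      have hLx : 3/2 * (((lcaSubtree ts u v).leaves ∩ L.leaves).card : ℝ) ≤ 3/2 * (((lcaSubtree ts u v).leaves ∩ U).card : ℝ) := by
        have : ((lcaSubtree ts u v).leaves ∩ L.leaves).card ≤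
            ((lcaSubtree ts u v).leaves ∩ U).card := by
          apply Finset.card_le_card
          refine Finset.inter_subset_inter (Finset.Subset.refl _) ?_
          rw [hU, leaves_node]; exact Finset.subset_union_left
        have h' : (((lcaSubtree ts u v).leaves ∩ L.leaves).card : ℝ) ≤
            (((lcaSubtree ts u v).leaves ∩ U).card : ℝ) := by exact_mod_cast this
        linarith
      have hRx : 3/2 * (((lcaSubtree ts u v).leaves ∩ R.leaves).card : ℝ) ≤ 3/2 * (((lcaSubtree ts u v).leaves ∩ U).card : ℝ) := by
        have : ((lcaSubtree ts u v).leaves ∩ R.leaves).card ≤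
            ((lcaSubtree ts u v).leaves ∩ U).card := by
          apply Finset.card_le_card
          refine Finset.inter_subset_inter (Finset.Subset.refl _) ?_
          rw [hU, leaves_node]; exact Finset.subset_union_right
        have h' : (((lcaSubtree ts u v).leaves ∩ R.leaves).card : ℝ) ≤
            (((lcaSubtree ts u v).leaves ∩ U).card : ℝ) := by exact_mod_cast this
        linarith
      rw [chg_node_def]
      by_cases hcr : (u ∈ S ∧ v ∈ U \ S) ∨ (v ∈ S ∧ u ∈ U \ S)
      · -- crossing case: 2m < 3x, then use Lemma A
        have hxbig : 2 * U.card < 3 * ((lcaSubtree ts u v).leaves ∩ U).card := by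
          rcases hcr with h1 | h2
          · exact hlca u h1.1 v (Finset.mem_sdiff.mp h1.2).1 (Finset.mem_sdiff.mp h1.2).2
          · have := hlca v h2.1 u (Finset.mem_sdiff.mp h2.2).1 (Finset.mem_sdiff.mp h2.2).2
            rwa [lca_comm ts v u] at this
        have hmx : (U.card : ℝ) ≤ 3/2 * (((lcaSubtree ts u v).leaves ∩ U).card : ℝ) := by
          have h2' : 2 * (U.card : ℝ) < 3 * (((lcaSubtree ts u v).leaves ∩ U).card : ℝ) := by
            exact_mod_cast hxbig
          linarith
        have hcross : (if u ∈ S ∧ v ∈ U \ S then q else 0)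
            + (if v ∈ S ∧ u ∈ U \ S then q else 0) ≤ q := by
          by_cases h1 : u ∈ S ∧ v ∈ U \ S
          · rw [if_pos h1, if_neg, add_zero]
            intro h2; exact (Finset.mem_sdiff.mp h2.2).2 h1.1
          · rw [if_neg h1, zero_add]; split_ifs; exacts [le_refl q, hq0]
        have hmcard : (U.card : ℝ) = (L.leaves.card : ℝ) + R.leaves.card := by
          rw [hU, card_leaves_node hndt]; push_cast; ring
        -- bound the recursive part by Lemma A
        by_cases hL : u ∈ L.leaves ∧ v ∈ L.leaves
        · have hR : ¬(u ∈ R.leaves ∧ v ∈ R.leaves) :=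
            fun hc => (Finset.disjoint_left.mp hd hL.1) hc.1
          rw [if_pos hL, if_neg hR, add_zero]
          have hA := chg_le_card ts L (nodup_left hndt) u v
          have hqb : q ≤ (R.leaves.card : ℝ) := q_le_right L R
          linarith
        · rw [if_neg hL]
          by_cases hR : u ∈ R.leaves ∧ v ∈ R.leaves
          · rw [if_pos hR, add_zero]
            have hA := chg_le_card ts R (nodup_right hndt) u v
            have hqb : q ≤ (L.leaves.card : ℝ) := q_le_left L R
            linarith
          · rw [if_neg hR]
            have hqb : q ≤ (R.leaves.card : ℝ) := q_le_right L R
            have ha0 : (1:ℝ) ≤ L.leaves.card := by exact_mod_cast ha1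
            linarith
      · -- no crossing: recurse
        have h1 : ¬(u ∈ S ∧ v ∈ U \ S) := fun h => hcr (Or.inl h)
        have h2 : ¬(v ∈ S ∧ u ∈ U \ S) := fun h => hcr (Or.inr h)
        rw [if_neg h1, if_neg h2, add_zero, zero_add]
        by_cases hL : u ∈ L.leaves ∧ v ∈ L.leaves
        · have hR : ¬(u ∈ R.leaves ∧ v ∈ R.leaves) :=
            fun hc => (Finset.disjoint_left.mp hd hL.1) hc.1
          rw [if_pos hL, if_neg hR, add_zero]
          have hsubL : L.leaves ⊆ ts.leaves := by
            intro y hy; exact hsub (by rw [hU, leaves_node]; exact Finset.mem_union_left _ hy)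
          exact le_trans (ihL (nodup_left hndt) hsubL) hLx
        · rw [if_neg hL]
          by_cases hR : u ∈ R.leaves ∧ v ∈ R.leaves
          · rw [if_pos hR, zero_add]
            have hsubR : R.leaves ⊆ ts.leaves := by
              intro y hy
              exact hsub (by rw [hU, leaves_node]; exact Finset.mem_union_right _ hy)
            exact le_trans (ihR (nodup_right hndt) hsubR) hRx
          · rw [if_neg hR, add_zero]
            positivity

lemma chg_diag (ts t : ClusterTree V) (u : V) : chg ts t u u = 0 := by
  induction t with
  | leaf x => rfl
  | node L R ihL ihR =>
      rw [chg_node_def]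
      have h1 : ¬(u ∈ chooseCut ts (ClusterTree.node L R).leaves ∧
          u ∈ (ClusterTree.node L R).leaves \ chooseCut ts (ClusterTree.node L R).leaves) :=
        fun h => (Finset.mem_sdiff.mp h.2).2 h.1
      rw [if_neg h1]
      split_ifs <;> simp [ihL, ihR]

/-- Claim 1: the cost of a recursive `φ`-sparsest-cut tree is bounded by the
total charge. -/
lemma cost_le_charge (w : V → V → ℝ) (hsym : ∀ u v, w u v = w v u)
    (hnonneg : ∀ u v, 0 ≤ w u v) (φ : ℝ) (hφ : 1 ≤ φ)
    (ts : ClusterTree V) (hnds : ts.leavesList.Nodup)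
    (t : ClusterTree V) (hndt : t.leavesList.Nodup) (hsub : t.leaves ⊆ ts.leaves)
    (hrec : IsRecApproxSparsestCutTree w φ t) :
    dasguptaCost w t ≤
      9/4 * φ * ∑ u ∈ t.leaves, ∑ v ∈ t.leaves, chg ts t u v * w u v := by
  induction t with
  | leaf x =>
      show (0:ℝ) ≤ _
      have : ∀ u ∈ (ClusterTree.leaf x).leaves, ∀ v ∈ (ClusterTree.leaf x).leaves,
          chg ts (ClusterTree.leaf x) u v * w u v = 0 := by
        intro u _ v _; show (0:ℝ) * w u v = 0; ring
      rw [Finset.sum_congr rfl fun u hu => Finset.sum_eq_zero fun v hv => this u hu v hv]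
      simp
  | node L R ihL ihR =>
      obtain ⟨hcut, hrecL, hrecR⟩ := hrec
      have hd : Disjoint L.leaves R.leaves := disjoint_leaves hndt
      set U := (ClusterTree.node L R).leaves with hU
      set S := chooseCut ts U with hS
      set q := (L.leaves.card * R.leaves.card : ℝ) / ((L.leaves.card : ℝ) + R.leaves.card)
        with hqdef
      have ha1 : 1 ≤ L.leaves.card := one_le_card_leaves L
      have hb1 : 1 ≤ R.leaves.card := one_le_card_leaves R
      have hm2 : 2 ≤ U.card := by rw [hU, card_leaves_node hndt]; omega
      have hinter : ts.leaves ∩ U = U := Finset.inter_eq_right.mpr hsub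
      have hbig : 2 * U.card < 3 * (ts.leaves ∩ U).card := by rw [hinter]; omega
      obtain ⟨hsubS, hlow, hup, hlca⟩ := chooseCut_spec ts U hnds hm2 hbig
      rw [← hS] at hsubS hlow hup
      have hsubSU : S ⊆ U := hsubS.trans Finset.inter_subset_right
      have hsubT' : U \ S ⊆ U := Finset.sdiff_subset
      have hcardT' : (U \ S).card = U.card - S.card := Finset.card_sdiff_of_subset hsubSU
      have hsL : L.leaves ⊆ ts.leaves := fun y hy =>
        hsub (by rw [hU, leaves_node]; exact Finset.mem_union_left _ hy)
      have hsR : R.leaves ⊆ ts.leaves := fun y hy =>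
        hsub (by rw [hU, leaves_node]; exact Finset.mem_union_right _ hy)
      have hsubLU : L.leaves ⊆ U := by rw [hU, leaves_node]; exact Finset.subset_union_left
      have hsubRU : R.leaves ⊆ U := by rw [hU, leaves_node]; exact Finset.subset_union_right
      -- split the double sum
      have hsplit : (∑ u ∈ U, ∑ v ∈ U, chg ts (ClusterTree.node L R) u v * w u v)
          = q * cutWeight w S (U \ S) + q * cutWeight w (U \ S) S
            + (∑ u ∈ L.leaves, ∑ v ∈ L.leaves, chg ts L u v * w u v)
            + (∑ u ∈ R.leaves, ∑ v ∈ R.leaves, chg ts R u v * w u v) := by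
        have h1 : ∀ u v, chg ts (ClusterTree.node L R) u v * w u v =
            (if u ∈ S ∧ v ∈ U \ S then q * w u v else 0)
            + (if u ∈ U \ S ∧ v ∈ S then q * w u v else 0)
            + (if u ∈ L.leaves ∧ v ∈ L.leaves then chg ts L u v * w u v else 0)
            + (if u ∈ R.leaves ∧ v ∈ R.leaves then chg ts R u v * w u v else 0) := by
          intro u v
          rw [chg_node_def]
          have hswap : (if v ∈ S ∧ u ∈ U \ S then q else 0)
              = (if u ∈ U \ S ∧ v ∈ S then q else 0) := by
            by_cases h : v ∈ S ∧ u ∈ U \ S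
            · rw [if_pos h, if_pos ⟨h.2, h.1⟩]
            · rw [if_neg h, if_neg fun hc => h ⟨hc.2, hc.1⟩]
          rw [hswap]
          split_ifs <;> ring
        rw [Finset.sum_congr rfl fun u _ => Finset.sum_congr rfl fun v _ => h1 u v]
        have h2 : ∀ u ∈ U, (∑ v ∈ U,
            ((if u ∈ S ∧ v ∈ U \ S then q * w u v else 0)
            + (if u ∈ U \ S ∧ v ∈ S then q * w u v else 0)
            + (if u ∈ L.leaves ∧ v ∈ L.leaves then chg ts L u v * w u v else 0)
            + (if u ∈ R.leaves ∧ v ∈ R.leaves then chg ts R u v * w u v else 0)))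
            = (∑ v ∈ U, if u ∈ S ∧ v ∈ U \ S then q * w u v else 0)
            + (∑ v ∈ U, if u ∈ U \ S ∧ v ∈ S then q * w u v else 0)
            + (∑ v ∈ U, if u ∈ L.leaves ∧ v ∈ L.leaves then chg ts L u v * w u v else 0)
            + (∑ v ∈ U, if u ∈ R.leaves ∧ v ∈ R.leaves then chg ts R u v * w u v else 0) := by
          intro u _
          rw [Finset.sum_add_distrib, Finset.sum_add_distrib, Finset.sum_add_distrib]
        rw [Finset.sum_congr rfl h2, Finset.sum_add_distrib, Finset.sum_add_distrib,
          Finset.sum_add_distrib]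
        rw [sum_ite_and_mem hsubSU hsubT', sum_ite_and_mem hsubT' hsubSU,
          sum_ite_and_mem hsubLU hsubLU, sum_ite_and_mem hsubRU hsubRU]
        rw [cutWeight, cutWeight, Finset.mul_sum, Finset.mul_sum]
        congr 3
        · exact Finset.sum_congr rfl fun a _ => by rw [Finset.mul_sum]
        · exact Finset.sum_congr rfl fun a _ => by rw [Finset.mul_sum]
      -- the key sparsest-cut estimate at the root
      have hcutS := hcut S (by rw [← leaves_node]; exact hsubSU)
        (Finset.card_pos.mp (by omega))
        (Finset.ssubset_iff_subset_ne.mpr ⟨by rw [← leaves_node]; exact hsubSU, by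
          intro h
          have hSU : S.card = U.card := by rw [hU, leaves_node, ← h]
          omega⟩)
      rw [← leaves_node, ← hU] at hcutS
      have hnode : ((L.leaves.card + R.leaves.card : ℕ) : ℝ) * cutWeight w L.leaves R.leaves
          ≤ 9/4 * φ * (q * cutWeight w S (U \ S) + q * cutWeight w (U \ S) S) := by
        have hcomm : cutWeight w (U \ S) S = cutWeight w S (U \ S) := cutWeight_comm w hsym _ _
        rw [hcomm]
        have haR : (0:ℝ) < (L.leaves.card : ℝ) := by exact_mod_cast ha1
        have hbR : (0:ℝ) < (R.leaves.card : ℝ) := by exact_mod_cast hb1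
        have hsepos : 0 < S.card := by omega
        have hs'pos : 0 < (U \ S).card := by omega
        have hsR' : (0:ℝ) < (S.card : ℝ) := by exact_mod_cast hsepos
        have hs'R : (0:ℝ) < ((U \ S).card : ℝ) := by exact_mod_cast hs'pos
        have hcwS0 : 0 ≤ cutWeight w S (U \ S) := cutWeight_nonneg w hnonneg _ _
        have hφ0 : (0:ℝ) ≤ φ := by linarith
        -- from the sparsity hypothesis
        have h1 : cutWeight w L.leaves R.leaves ≤
            φ * (cutWeight w S (U \ S) / ((S.card : ℝ) * ((U \ S).card : ℝ)))
              * ((L.leaves.card : ℝ) * (R.leaves.card : ℝ)) := by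
          have := hcutS
          rw [div_le_iff₀ (mul_pos haR hbR)] at this
          linarith
        have hmcast : ((L.leaves.card + R.leaves.card : ℕ) : ℝ)
            = (L.leaves.card : ℝ) + (R.leaves.card : ℝ) := by push_cast; ring
        rw [hmcast]
        have hmpos : (0:ℝ) < (L.leaves.card : ℝ) + (R.leaves.card : ℝ) := by linarith
        -- key numeric inequality : 2 m^2 ≤ 9 s s'
        have hkey : 2 * ((L.leaves.card : ℝ) + (R.leaves.card : ℝ))^2
            ≤ 9 * ((S.card : ℝ) * ((U \ S).card : ℝ)) := by
          have hscast : ((U \ S).card : ℝ) = (U.card : ℝ) - (S.card : ℝ) := by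
            rw [hcardT']
            have : S.card ≤ U.card := Finset.card_le_card hsubSU
            push_cast [this]
            ring
          have hmU : (U.card : ℝ) = (L.leaves.card : ℝ) + (R.leaves.card : ℝ) := by
            rw [hU, card_leaves_node hndt]; push_cast; ring
          have hl : (U.card : ℝ) ≤ 3 * (S.card : ℝ) := by exact_mod_cast hlow
          have hu' : 3 * (S.card : ℝ) ≤ 2 * (U.card : ℝ) := by exact_mod_cast hup
          rw [hscast, ← hmU]
          nlinarith [mul_nonneg (sub_nonneg.mpr hl) (sub_nonneg.mpr hu')]
        calc ((L.leaves.card : ℝ) + (R.leaves.card : ℝ)) * cutWeight w L.leaves R.leaves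
            ≤ ((L.leaves.card : ℝ) + (R.leaves.card : ℝ)) *
              (φ * (cutWeight w S (U \ S) / ((S.card : ℝ) * ((U \ S).card : ℝ)))
                * ((L.leaves.card : ℝ) * (R.leaves.card : ℝ))) := by
              apply mul_le_mul_of_nonneg_left h1 (le_of_lt hmpos)
          _ ≤ 9/4 * φ * (q * cutWeight w S (U \ S) + q * cutWeight w S (U \ S)) := by
              have hfrac : ((L.leaves.card : ℝ) + (R.leaves.card : ℝ)) /
                  ((S.card : ℝ) * ((U \ S).card : ℝ))
                  ≤ (9/2) / ((L.leaves.card : ℝ) + (R.leaves.card : ℝ)) := by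
                rw [div_le_div_iff₀ (mul_pos hsR' hs'R) hmpos]
                nlinarith
              have e1 : ((L.leaves.card : ℝ) + (R.leaves.card : ℝ)) *
                  (φ * (cutWeight w S (U \ S) / ((S.card : ℝ) * ((U \ S).card : ℝ)))
                    * ((L.leaves.card : ℝ) * (R.leaves.card : ℝ)))
                  = (φ * ((L.leaves.card : ℝ) * (R.leaves.card : ℝ))
                      * cutWeight w S (U \ S)) *
                    (((L.leaves.card : ℝ) + (R.leaves.card : ℝ))
                      / ((S.card : ℝ) * ((U \ S).card : ℝ))) := by
                ring
              have e2 : 9/4 * φ * (q * cutWeight w S (U \ S) + q * cutWeight w S (U \ S))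
                  = (φ * ((L.leaves.card : ℝ) * (R.leaves.card : ℝ))
                      * cutWeight w S (U \ S)) *
                    ((9/2) / ((L.leaves.card : ℝ) + (R.leaves.card : ℝ))) := by
                rw [hqdef]; ring
              rw [e1, e2]
              exact mul_le_mul_of_nonneg_left hfrac
                (mul_nonneg (mul_nonneg hφ0 (le_of_lt (mul_pos haR hbR))) hcwS0)
      -- put everything together
      have hL' := ihL (nodup_left hndt) hsL hrecL
      have hR' := ihR (nodup_right hndt) hsR hrecR
      calc dasguptaCost w (ClusterTree.node L R)
          = ((L.leaves.card + R.leaves.card : ℕ) : ℝ) * cutWeight w L.leaves R.leaves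
            + dasguptaCost w L + dasguptaCost w R := rfl
        _ ≤ 9/4 * φ * (q * cutWeight w S (U \ S) + q * cutWeight w (U \ S) S)
            + 9/4 * φ * (∑ u ∈ L.leaves, ∑ v ∈ L.leaves, chg ts L u v * w u v)
            + 9/4 * φ * (∑ u ∈ R.leaves, ∑ v ∈ R.leaves, chg ts R u v * w u v) := by
            exact add_le_add (add_le_add hnode hL') hR'
        _ = 9/4 * φ * (q * cutWeight w S (U \ S) + q * cutWeight w (U \ S) S
            + (∑ u ∈ L.leaves, ∑ v ∈ L.leaves, chg ts L u v * w u v)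
            + (∑ u ∈ R.leaves, ∑ v ∈ R.leaves, chg ts R u v * w u v)) := by ring
        _ = 9/4 * φ * ∑ u ∈ U, ∑ v ∈ U, chg ts (ClusterTree.node L R) u v * w u v := by
            rw [hsplit]

/-- The per-pair (LCA) expression for Dasgupta's cost. -/
lemma pair_identity (w : V → V → ℝ) (hsym : ∀ u v, w u v = w v u)
    (t : ClusterTree V) (hnd : t.leavesList.Nodup) :
    (∑ u ∈ t.leaves, ∑ v ∈ t.leaves,
      if u ≠ v then ((lcaSubtree t u v).leaves.card : ℝ) * w u v else 0)
      = 2 * dasguptaCost w t := by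
  induction t with
  | leaf x =>
      rw [leaves_leaf]
      show (∑ u ∈ {x}, ∑ v ∈ {x}, _) = 2 * (0:ℝ)
      rw [Finset.sum_singleton, Finset.sum_singleton, if_neg (by simp)]
      ring
  | node L R ihL ihR =>
      have hd : Disjoint L.leaves R.leaves := disjoint_leaves hnd
      have hLL : (∑ u ∈ L.leaves, ∑ v ∈ L.leaves,
          if u ≠ v then ((lcaSubtree (ClusterTree.node L R) u v).leaves.card : ℝ) * w u v
          else 0) = 2 * dasguptaCost w L := by
        rw [← ihL (nodup_left hnd)]
        refine Finset.sum_congr rfl fun u hu => Finset.sum_congr rfl fun v hv => ?_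
        rw [lca_left hu hv]
      have hRR : (∑ u ∈ R.leaves, ∑ v ∈ R.leaves,
          if u ≠ v then ((lcaSubtree (ClusterTree.node L R) u v).leaves.card : ℝ) * w u v
          else 0) = 2 * dasguptaCost w R := by
        rw [← ihR (nodup_right hnd)]
        refine Finset.sum_congr rfl fun u hu => Finset.sum_congr rfl fun v hv => ?_
        rw [lca_right hd hu hv]
      have hLR : (∑ u ∈ L.leaves, ∑ v ∈ R.leaves,
          if u ≠ v then ((lcaSubtree (ClusterTree.node L R) u v).leaves.card : ℝ) * w u v
          else 0)
          = ((ClusterTree.node L R).leaves.card : ℝ) * cutWeight w L.leaves R.leaves := by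
        rw [cutWeight, Finset.mul_sum]
        refine Finset.sum_congr rfl fun u hu => ?_
        rw [Finset.mul_sum]
        refine Finset.sum_congr rfl fun v hv => ?_
        have hne : u ≠ v := fun h => (Finset.disjoint_left.mp hd hu) (h ▸ hv)
        have huR : u ∉ R.leaves := Finset.disjoint_left.mp hd hu
        have hvL : v ∉ L.leaves := Finset.disjoint_right.mp hd hv
        rw [if_pos hne, lca_mix (fun hc => hvL hc.2) (fun hc => huR hc.1)]
      have hRL : (∑ u ∈ R.leaves, ∑ v ∈ L.leaves,
          if u ≠ v then ((lcaSubtree (ClusterTree.node L R) u v).leaves.card : ℝ) * w u v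
          else 0)
          = ((ClusterTree.node L R).leaves.card : ℝ) * cutWeight w L.leaves R.leaves := by
        rw [cutWeight_comm w hsym, cutWeight, Finset.mul_sum]
        refine Finset.sum_congr rfl fun u hu => ?_
        rw [Finset.mul_sum]
        refine Finset.sum_congr rfl fun v hv => ?_
        have hne : u ≠ v := fun h => (Finset.disjoint_right.mp hd hu) (h ▸ hv)
        have huL : u ∉ L.leaves := Finset.disjoint_right.mp hd hu
        have hvR : v ∉ R.leaves := Finset.disjoint_left.mp hd hv
        rw [if_pos hne, lca_mix (fun hc => huL hc.1) (fun hc => hvR hc.2)]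
      have hsplit : (∑ u ∈ (ClusterTree.node L R).leaves, ∑ v ∈ (ClusterTree.node L R).leaves,
          if u ≠ v then ((lcaSubtree (ClusterTree.node L R) u v).leaves.card : ℝ) * w u v
          else 0)
          = (∑ u ∈ L.leaves, ∑ v ∈ L.leaves,
              if u ≠ v then ((lcaSubtree (ClusterTree.node L R) u v).leaves.card : ℝ) * w u v
              else 0)
            + (∑ u ∈ L.leaves, ∑ v ∈ R.leaves,
              if u ≠ v then ((lcaSubtree (ClusterTree.node L R) u v).leaves.card : ℝ) * w u v
              else 0)
            + ((∑ u ∈ R.leaves, ∑ v ∈ L.leaves,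
              if u ≠ v then ((lcaSubtree (ClusterTree.node L R) u v).leaves.card : ℝ) * w u v
              else 0)
            + (∑ u ∈ R.leaves, ∑ v ∈ R.leaves,
              if u ≠ v then ((lcaSubtree (ClusterTree.node L R) u v).leaves.card : ℝ) * w u v
              else 0)) := by
        rw [leaves_node, Finset.sum_union hd]
        congr 1
        · rw [← Finset.sum_add_distrib]
          refine Finset.sum_congr rfl fun u _ => ?_
          rw [Finset.sum_union hd]
        · rw [← Finset.sum_add_distrib]
          refine Finset.sum_congr rfl fun u _ => ?_
          rw [Finset.sum_union hd]
      rw [hsplit, hLL, hRR, hLR, hRL]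
      have hm : ((ClusterTree.node L R).leaves.card : ℝ)
          = ((L.leaves.card + R.leaves.card : ℕ) : ℝ) := by
        rw [card_leaves_node hnd]
      have hcost : dasguptaCost w (ClusterTree.node L R)
          = ((L.leaves.card + R.leaves.card : ℕ) : ℝ) * cutWeight w L.leaves R.leaves
            + dasguptaCost w L + dasguptaCost w R := rfl
      rw [hm, hcost]
      ring

end CKMMAux

end CKMMAux

/-- Theorem 2, CKMM: the recursive `φ`-approximate sparsest-cut
algorithm is a `(27/4)·φ`-approximation for Dasgupta's cost function. -/
theorem statement2 {V : Type} [Fintype V] [DecidableEq V] (w : V → V → ℝ)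
    (hsym : ∀ u v, w u v = w v u) (hnonneg : ∀ u v, 0 ≤ w u v)
    (φ : ℝ) (hφ : 1 ≤ φ)
    (T : ClusterTree V) (hT : IsClusterTree T)
    (hrec : IsRecApproxSparsestCutTree w φ T) :
    ∀ Tstar : ClusterTree V, IsClusterTree Tstar →
      dasguptaCost w T ≤ 27 / 4 * φ * dasguptaCost w Tstar := by
  intro Tstar hTstar
  obtain ⟨hndT, hunivT⟩ := hT
  obtain ⟨hndS, hunivS⟩ := hTstar
  have hsub : T.leaves ⊆ Tstar.leaves := by rw [hunivS]; exact Finset.subset_univ _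
  have hφ0 : (0:ℝ) ≤ φ := by linarith
  have h1 := CKMMAux.cost_le_charge w hsym hnonneg φ hφ Tstar hndS T hndT hsub hrec
  have hpt : ∀ u ∈ T.leaves, ∀ v ∈ T.leaves,
      CKMMAux.chg Tstar T u v * w u v ≤
        3/2 * (if u ≠ v then ((lcaSubtree Tstar u v).leaves.card : ℝ) * w u v else 0) := by
    intro u hu v hv
    by_cases huv : u = v
    · subst huv
      rw [CKMMAux.chg_diag, if_neg (by simp)]
      simp
    · rw [if_pos huv]
      have hb := CKMMAux.chg_le_lca Tstar hndS T hndT hsub u v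
      rw [hunivT, Finset.inter_univ] at hb
      calc CKMMAux.chg Tstar T u v * w u v
          ≤ (3/2 * ((lcaSubtree Tstar u v).leaves.card : ℝ)) * w u v :=
            mul_le_mul_of_nonneg_right hb (hnonneg u v)
        _ = 3/2 * (((lcaSubtree Tstar u v).leaves.card : ℝ) * w u v) := by ring
  have h2 : (∑ u ∈ T.leaves, ∑ v ∈ T.leaves, CKMMAux.chg Tstar T u v * w u v)
      ≤ 3/2 * (∑ u ∈ T.leaves, ∑ v ∈ T.leaves,
          if u ≠ v then ((lcaSubtree Tstar u v).leaves.card : ℝ) * w u v else 0) := by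
    rw [Finset.mul_sum]
    refine Finset.sum_le_sum fun u hu => ?_
    rw [Finset.mul_sum]
    exact Finset.sum_le_sum fun v hv => hpt u hu v hv
  have hid := CKMMAux.pair_identity w hsym Tstar hndS
  rw [hunivS] at hid
  rw [hunivT] at h2
  calc dasguptaCost w T
      ≤ 9/4 * φ * ∑ u ∈ T.leaves, ∑ v ∈ T.leaves, CKMMAux.chg Tstar T u v * w u v := h1
    _ = 9/4 * φ * ∑ u ∈ Finset.univ, ∑ v ∈ Finset.univ,
          CKMMAux.chg Tstar T u v * w u v := by rw [hunivT]
    _ ≤ 9/4 * φ * (3/2 * (∑ u ∈ Finset.univ, ∑ v ∈ Finset.univ,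
          if u ≠ v then ((lcaSubtree Tstar u v).leaves.card : ℝ) * w u v else 0)) := by
        apply mul_le_mul_of_nonneg_left h2 (by positivity)
    _ = 9/4 * φ * (3/2 * (2 * dasguptaCost w Tstar)) := by rw [hid]
    _ = 27 / 4 * φ * dasguptaCost w Tstar := by ring
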